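/- Let V ⊆ ℝⁿ be a linear subspace of dimension d, let x₀ ∈ ℝⁿ, let H be an invertible real n×n matrix, and let Σ be a real positive-definite n×n matrix with unique positive-definite square root Σ^{1/2}. For y ∈ ℝⁿ let x̂₀(y) denote the unique minimizer over x ∈ x₀ + V of the Mahalanobis distance (y − Hx)ᵀΣ⁻¹(y − Hx), and define the score prediction s(y) = −Σ⁻¹(y − H x̂₀(y)), which is an affine function of y with constant Jacobian Ds. Let ε be distributed according to the standard Gaussian measure N(0, Iₙ) on ℝⁿ and set x_t = Hx₀ + Σ^{1/2}ε. Then E[ Tr(Σ · Ds) + (1/2) s(x_t)ᵀ Σ s(x_t) ] = −(n − d)/2. -/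

import Mathlib

open MeasureTheory ProbabilityTheory Matrix Real Filter
open scoped NNReal ENNReal

noncomputable section ISMAux

/-! ### Auxiliary matrix lemmas -/

lemma my_mat_ext {n : ℕ} {A B : Matrix (Fin n) (Fin n) ℝ}
    (h : ∀ v, A.mulVec v = B.mulVec v) : A = B := by
  ext i j
  have := congrFun (h (Pi.single j 1)) i
  simpa [Matrix.mulVec_single] using this

lemma my_mat_ext_dot {n : ℕ} {A B : Matrix (Fin n) (Fin n) ℝ}
    (h : ∀ z w, z ⬝ᵥ A.mulVec w = z ⬝ᵥ B.mulVec w) : A = B := by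
  apply my_mat_ext
  intro w
  funext i
  have := h (Pi.single i 1) w
  simpa [single_dotProduct] using this

lemma my_dot_symm {n : ℕ} {A : Matrix (Fin n) (Fin n) ℝ} (hA : Aᵀ = A)
    (v w : Fin n → ℝ) : v ⬝ᵥ A.mulVec w = w ⬝ᵥ A.mulVec v := by
  rw [Matrix.dotProduct_mulVec]
  have h1 : Matrix.vecMul v A = A.mulVec v := by
    conv_lhs => rw [← hA]
    rw [Matrix.vecMul_transpose]
  rw [h1, dotProduct_comm]

/-! ### One-dimensional Gaussian computations -/

lemma my_pdf_eq (x : ℝ) :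
    gaussianPDFReal 0 1 x = (Real.sqrt (2 * π))⁻¹ * Real.exp (-(2⁻¹ : ℝ) * x ^ 2) := by
  simp only [gaussianPDFReal, NNReal.coe_one, mul_one, sub_zero]
  congr 1
  ring

lemma my_sq_tendsto_atTop : Tendsto (fun x : ℝ => x ^ 2) atTop atTop :=
  tendsto_pow_atTop two_ne_zero

lemma my_sq_tendsto_atBot : Tendsto (fun x : ℝ => x ^ 2) atBot atTop := by
  have := my_sq_tendsto_atTop.comp tendsto_neg_atBot_atTop
  simpa [Function.comp_def] using this

lemma my_exparg {l : Filter ℝ} (h : Tendsto (fun x : ℝ => x ^ 2) l atTop) :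
    Tendsto (fun x : ℝ => Real.exp (-(2⁻¹ : ℝ) * x ^ 2)) l (nhds 0) := by
  have h1 : Tendsto (fun x : ℝ => -(2⁻¹ : ℝ) * x ^ 2) l atBot := by
    have := (h.const_mul_atTop (by norm_num : (0:ℝ) < 2⁻¹))
    have h2 := tendsto_neg_atTop_atBot.comp this
    simpa [Function.comp_def, neg_mul] using h2
  exact Real.tendsto_exp_atBot.comp h1

lemma my_xexp_top : Tendsto (fun x : ℝ => x * Real.exp (-(2⁻¹ : ℝ) * x ^ 2)) atTop (nhds 0) := by
  have hg : Tendsto (fun x : ℝ => (2⁻¹ * x ^ 2) ^ 1 * Real.exp (-(2⁻¹ * x ^ 2))) atTop (nhds 0) := by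
    have := (tendsto_pow_mul_exp_neg_atTop_nhds_zero 1).comp
      ((my_sq_tendsto_atTop.const_mul_atTop (by norm_num : (0:ℝ) < 2⁻¹)))
    simpa [Function.comp_def] using this
  refine tendsto_of_tendsto_of_tendsto_of_le_of_le'
    (tendsto_const_nhds : Tendsto (fun _ : ℝ => (0:ℝ)) atTop (nhds 0)) hg ?_ ?_
  · filter_upwards [eventually_ge_atTop (0:ℝ)] with x hx
    positivity
  · filter_upwards [eventually_ge_atTop (2:ℝ)] with x hx
    have h1 : x ≤ 2⁻¹ * x ^ 2 := by nlinarith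
    have h2 : (0:ℝ) < Real.exp (-(2⁻¹ * x ^ 2)) := Real.exp_pos _
    calc x * Real.exp (-(2⁻¹:ℝ) * x ^ 2) = x * Real.exp (-(2⁻¹ * x ^ 2)) := by ring_nf
    _ ≤ (2⁻¹ * x ^ 2) * Real.exp (-(2⁻¹ * x ^ 2)) := by nlinarith
    _ = (2⁻¹ * x ^ 2) ^ 1 * Real.exp (-(2⁻¹ * x ^ 2)) := by ring

lemma my_xexp_bot : Tendsto (fun x : ℝ => x * Real.exp (-(2⁻¹ : ℝ) * x ^ 2)) atBot (nhds 0) := by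
  have h := (my_xexp_top.neg).comp tendsto_neg_atBot_atTop
  have heq : (fun x : ℝ => -((-x) * Real.exp (-(2⁻¹:ℝ) * (-x) ^ 2)))
      = fun x : ℝ => x * Real.exp (-(2⁻¹:ℝ) * x ^ 2) := by
    funext x; ring_nf
  simpa [Function.comp_def, heq, neg_zero] using h

lemma my_int_xexp : Integrable (fun x : ℝ => x * Real.exp (-(2⁻¹:ℝ) * x ^ 2)) := by
  simpa using integrable_mul_exp_neg_mul_sq (by norm_num : (0:ℝ) < 2⁻¹)

lemma my_int_x2exp : Integrable (fun x : ℝ => x ^ 2 * Real.exp (-(2⁻¹:ℝ) * x ^ 2)) := by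
  have := integrable_rpow_mul_exp_neg_mul_sq (by norm_num : (0:ℝ) < 2⁻¹) (by norm_num : (-1:ℝ) < 2)
  simpa [Real.rpow_natCast] using this

lemma my_int_exp : Integrable (fun x : ℝ => Real.exp (-(2⁻¹:ℝ) * x ^ 2)) :=
  integrable_exp_neg_mul_sq (by norm_num : (0:ℝ) < 2⁻¹)

lemma my_integral_xexp : ∫ x : ℝ, x * Real.exp (-(2⁻¹:ℝ) * x ^ 2) = 0 := by
  have hderiv : ∀ x : ℝ, HasDerivAt (fun y : ℝ => -Real.exp (-(2⁻¹:ℝ) * y ^ 2))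
      (x * Real.exp (-(2⁻¹:ℝ) * x ^ 2)) x := by
    intro x
    have h1 : HasDerivAt (fun y : ℝ => -(2⁻¹:ℝ) * y ^ 2) (-(2⁻¹:ℝ) * (2 * x)) x := by
      simpa using ((hasDerivAt_pow 2 x).const_mul (-(2⁻¹:ℝ)))
    have h2 := (h1.exp).neg
    exact h2.congr_deriv (by ring)
  have := integral_of_hasDerivAt_of_tendsto hderiv my_int_xexp
    ((my_exparg my_sq_tendsto_atBot).neg) ((my_exparg my_sq_tendsto_atTop).neg)
  simpa using this

lemma my_integral_x2exp :
    ∫ x : ℝ, x ^ 2 * Real.exp (-(2⁻¹:ℝ) * x ^ 2) = Real.sqrt (2 * π) := by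
  have hderiv : ∀ x : ℝ, HasDerivAt (fun y : ℝ => -(y * Real.exp (-(2⁻¹:ℝ) * y ^ 2)))
      ((x ^ 2 - 1) * Real.exp (-(2⁻¹:ℝ) * x ^ 2)) x := by
    intro x
    have h1 : HasDerivAt (fun y : ℝ => -(2⁻¹:ℝ) * y ^ 2) (-(2⁻¹:ℝ) * (2 * x)) x := by
      simpa using ((hasDerivAt_pow 2 x).const_mul (-(2⁻¹:ℝ)))
    have h2 := (((hasDerivAt_id x).mul h1.exp)).neg
    exact h2.congr_deriv (by simp only [id_eq, one_mul]; ring)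
  have hint : Integrable (fun x : ℝ => (x ^ 2 - 1) * Real.exp (-(2⁻¹:ℝ) * x ^ 2)) := by
    have := my_int_x2exp.sub my_int_exp
    simpa [sub_mul, Pi.sub_def] using this
  have h0 := integral_of_hasDerivAt_of_tendsto hderiv hint
    (my_xexp_bot.neg) (my_xexp_top.neg)
  have h1 : ∫ x : ℝ, (x ^ 2 - 1) * Real.exp (-(2⁻¹:ℝ) * x ^ 2) = 0 := by simpa using h0
  have h2 : ∫ x : ℝ, (x ^ 2 - 1) * Real.exp (-(2⁻¹:ℝ) * x ^ 2)
      = (∫ x : ℝ, x ^ 2 * Real.exp (-(2⁻¹:ℝ) * x ^ 2)) - ∫ x : ℝ, Real.exp (-(2⁻¹:ℝ) * x ^ 2) := by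
    rw [← integral_sub my_int_x2exp my_int_exp]
    congr 1; funext x; ring
  have h3 : ∫ x : ℝ, Real.exp (-(2⁻¹:ℝ) * x ^ 2) = Real.sqrt (2 * π) := by
    have h := integral_gaussian (2⁻¹:ℝ)
    rw [h]
    congr 1
    ring
  linarith [h1, h2, h3]

/-! ### gaussianReal moments -/

lemma my_greal_eq :
    gaussianReal 0 1 = (volume : Measure ℝ).withDensity
      (fun x => ((Real.toNNReal (gaussianPDFReal 0 1 x) : ℝ≥0) : ℝ≥0∞)) := by
  rw [gaussianReal_of_var_ne_zero 0 one_ne_zero]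
  rfl

lemma my_meas_pdf : Measurable (fun x => (Real.toNNReal (gaussianPDFReal 0 1 x))) :=
  (measurable_gaussianPDFReal 0 1).real_toNNReal

lemma my_integral_greal (g : ℝ → ℝ) :
    ∫ x, g x ∂(gaussianReal 0 1) = ∫ x, gaussianPDFReal 0 1 x * g x := by
  rw [my_greal_eq, integral_withDensity_eq_integral_smul my_meas_pdf]
  congr 1
  funext x
  simp [NNReal.smul_def, Real.coe_toNNReal _ (gaussianPDFReal_nonneg 0 1 x)]

lemma my_integrable_greal_iff (g : ℝ → ℝ) :
    Integrable g (gaussianReal 0 1) ↔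
      Integrable (fun x => gaussianPDFReal 0 1 x * g x) volume := by
  rw [my_greal_eq, integrable_withDensity_iff_integrable_smul my_meas_pdf]
  constructor <;> intro h <;> refine h.congr (Filter.Eventually.of_forall fun x => ?_) <;>
    simp [NNReal.smul_def, Real.coe_toNNReal _ (gaussianPDFReal_nonneg 0 1 x)]

lemma my_sqrt2pi_pos : (0:ℝ) < Real.sqrt (2 * π) := Real.sqrt_pos.mpr (by positivity)

lemma my_g_int_id : Integrable (fun x : ℝ => x) (gaussianReal 0 1) := by
  rw [my_integrable_greal_iff]
  refine (my_int_xexp.const_mul ((Real.sqrt (2 * π))⁻¹)).congr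
    (Filter.Eventually.of_forall fun x => ?_)
  simp only [my_pdf_eq]; ring

lemma my_g_int_sq : Integrable (fun x : ℝ => x ^ 2) (gaussianReal 0 1) := by
  rw [my_integrable_greal_iff]
  refine (my_int_x2exp.const_mul ((Real.sqrt (2 * π))⁻¹)).congr
    (Filter.Eventually.of_forall fun x => ?_)
  simp only [my_pdf_eq]; ring

lemma my_g_mean : ∫ x, x ∂(gaussianReal 0 1) = 0 := by
  rw [my_integral_greal]
  have h : ∀ x : ℝ, gaussianPDFReal 0 1 x * x
      = (Real.sqrt (2 * π))⁻¹ * (x * Real.exp (-(2⁻¹:ℝ) * x ^ 2)) := by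
    intro x; rw [my_pdf_eq]; ring
  simp_rw [h, integral_const_mul, my_integral_xexp, mul_zero]

lemma my_g_var : ∫ x, x ^ 2 ∂(gaussianReal 0 1) = 1 := by
  rw [my_integral_greal]
  have h : ∀ x : ℝ, gaussianPDFReal 0 1 x * x ^ 2
      = (Real.sqrt (2 * π))⁻¹ * (x ^ 2 * Real.exp (-(2⁻¹:ℝ) * x ^ 2)) := by
    intro x; rw [my_pdf_eq]; ring
  simp_rw [h, integral_const_mul, my_integral_x2exp]
  exact inv_mul_cancel₀ (ne_of_gt my_sqrt2pi_pos)

/-! ### Product measure moments -/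

lemma my_pi_prod (n : ℕ) (g : Fin n → ℝ → ℝ) :
    ∫ x : Fin n → ℝ, ∏ i, g i (x i) ∂(Measure.pi fun _ => gaussianReal 0 1)
      = ∏ i, ∫ x, g i x ∂(gaussianReal 0 1) := by
  have I1 : SigmaFinite (gaussianReal 0 1) := inferInstance
  have := MeasureTheory.integral_fin_nat_prod_eq_prod (E := fun _ => ℝ)
    (μ := fun _ => gaussianReal 0 1) g
  exact this

lemma my_pi_integrable (n : ℕ) (g : Fin n → ℝ → ℝ)
    (hg : ∀ i, Integrable (g i) (gaussianReal 0 1)) :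
    Integrable (fun x : Fin n → ℝ => ∏ i, g i (x i)) (Measure.pi fun _ => gaussianReal 0 1) := by
  have I1 : SigmaFinite (gaussianReal 0 1) := inferInstance
  have := MeasureTheory.Integrable.fin_nat_prod (E := fun _ => ℝ)
    (μ := fun _ => gaussianReal 0 1) (f := g) hg
  exact this

lemma my_cross (n : ℕ) (i j : Fin n) :
    ∫ x : Fin n → ℝ, x i * x j ∂(Measure.pi fun _ => gaussianReal 0 1)
      = if i = j then 1 else 0 := by
  by_cases hij : i = j
  · subst hij
    simp only [if_pos rfl]
    have hfun : ∀ x : Fin n → ℝ, x i * x i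
        = ∏ k, (fun t : ℝ => if k = i then t ^ 2 else 1) (x k) := by
      intro x
      rw [Finset.prod_ite_eq' Finset.univ i (fun k => (x k) ^ 2)]
      simp [sq]
    calc ∫ x : Fin n → ℝ, x i * x i ∂(Measure.pi fun _ => gaussianReal 0 1)
        = ∫ x : Fin n → ℝ, ∏ k, (fun t : ℝ => if k = i then t ^ 2 else 1) (x k)
            ∂(Measure.pi fun _ => gaussianReal 0 1) := by
          congr 1; funext x; exact hfun x
      _ = ∏ k, ∫ t : ℝ, (if k = i then t ^ 2 else 1) ∂(gaussianReal 0 1) := by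
          have := my_pi_prod n (fun k t => if k = i then t ^ 2 else 1)
          exact this
      _ = 1 := by
          rw [Finset.prod_eq_single i]
          · simp [my_g_var]
          · intro k _ hk; simp [hk]
          · intro h; exact absurd (Finset.mem_univ i) h
  · simp only [if_neg hij]
    have hfun : ∀ x : Fin n → ℝ, x i * x j
        = ∏ k, (fun t : ℝ => (if k = i then t else 1) * (if k = j then t else 1)) (x k) := by
      intro x
      rw [Finset.prod_mul_distrib]
      rw [Finset.prod_ite_eq' Finset.univ i (fun k => x k),
        Finset.prod_ite_eq' Finset.univ j (fun k => x k)]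
      simp
    calc ∫ x : Fin n → ℝ, x i * x j ∂(Measure.pi fun _ => gaussianReal 0 1)
        = ∫ x : Fin n → ℝ, ∏ k, (fun t : ℝ =>
            (if k = i then t else 1) * (if k = j then t else 1)) (x k)
            ∂(Measure.pi fun _ => gaussianReal 0 1) := by
          congr 1; funext x; exact hfun x
      _ = ∏ k, ∫ t : ℝ, (if k = i then t else 1) * (if k = j then t else 1)
            ∂(gaussianReal 0 1) := by
          exact my_pi_prod n fun k t => (if k = i then t else 1) * (if k = j then t else 1)
      _ = 0 := by
          apply Finset.prod_eq_zero (Finset.mem_univ i)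
          simp only [if_pos rfl, if_neg hij]
          simpa [mul_one] using my_g_mean

lemma my_cross_integrable (n : ℕ) (i j : Fin n) :
    Integrable (fun x : Fin n → ℝ => x i * x j) (Measure.pi fun _ => gaussianReal 0 1) := by
  by_cases hij : i = j
  · subst hij
    have h := my_pi_integrable n (fun k t => if k = i then t ^ 2 else 1)
      (fun k => by by_cases hk : k = i <;> simp [hk, my_g_int_sq, integrable_const])
    have hfun : ∀ x : Fin n → ℝ, x i * x i
        = ∏ k, (fun t : ℝ => if k = i then t ^ 2 else 1) (x k) := by
      intro x
      rw [Finset.prod_ite_eq' Finset.univ i (fun k => (x k) ^ 2)]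
      simp [sq]
    exact h.congr (Filter.Eventually.of_forall fun x => (hfun x).symm)
  · have h := my_pi_integrable n (fun k t => (if k = i then t else 1) * (if k = j then t else 1))
      (fun k => by
        by_cases hk : k = i
        · subst hk
          simp only [if_pos rfl, if_neg hij]
          simpa [mul_one] using my_g_int_id
        · by_cases hk' : k = j
          · subst hk'
            simp only [if_neg hk, if_pos rfl]
            simpa [one_mul] using my_g_int_id
          · simp [hk, hk', integrable_const])
    have hfun : ∀ x : Fin n → ℝ, x i * x j
        = ∏ k, (fun t : ℝ => (if k = i then t else 1) * (if k = j then t else 1)) (x k) := by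
      intro x
      rw [Finset.prod_mul_distrib]
      rw [Finset.prod_ite_eq' Finset.univ i (fun k => x k),
        Finset.prod_ite_eq' Finset.univ j (fun k => x k)]
      simp
    exact h.congr (Filter.Eventually.of_forall fun x => (hfun x).symm)

lemma my_quad_expand (n : ℕ) (M : Matrix (Fin n) (Fin n) ℝ) (x : Fin n → ℝ) :
    x ⬝ᵥ M.mulVec x = ∑ i, ∑ j, M i j * (x i * x j) := by
  simp only [dotProduct, Matrix.mulVec, Finset.mul_sum]
  refine Finset.sum_congr rfl fun i _ => Finset.sum_congr rfl fun j _ => by ring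

lemma my_quad_integrable (n : ℕ) (M : Matrix (Fin n) (Fin n) ℝ) :
    Integrable (fun x : Fin n → ℝ => x ⬝ᵥ M.mulVec x)
      (Measure.pi fun _ => gaussianReal 0 1) := by
  have h : Integrable (fun x : Fin n → ℝ => ∑ i, ∑ j, M i j * (x i * x j))
      (Measure.pi fun _ => gaussianReal 0 1) :=
    integrable_finset_sum _ fun i _ => integrable_finset_sum _ fun j _ =>
      (my_cross_integrable n i j).const_mul _
  exact h.congr (Filter.Eventually.of_forall fun x => (my_quad_expand n M x).symm)

lemma my_quad_integral (n : ℕ) (M : Matrix (Fin n) (Fin n) ℝ) :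
    ∫ x : Fin n → ℝ, x ⬝ᵥ M.mulVec x ∂(Measure.pi fun _ => gaussianReal 0 1)
      = M.trace := by
  have h1 : ∫ x : Fin n → ℝ, x ⬝ᵥ M.mulVec x ∂(Measure.pi fun _ => gaussianReal 0 1)
      = ∫ x : Fin n → ℝ, ∑ i, ∑ j, M i j * (x i * x j)
          ∂(Measure.pi fun _ => gaussianReal 0 1) := by
    congr 1; funext x; exact my_quad_expand n M x
  rw [h1, integral_finset_sum _ (f := fun i (x : Fin n → ℝ) => ∑ j, M i j * (x i * x j)) (fun i _ => integrable_finset_sum _ fun j _ =>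
    (my_cross_integrable n i j).const_mul _)]
  have h2 : ∀ i : Fin n, ∫ x : Fin n → ℝ, ∑ j, M i j * (x i * x j)
      ∂(Measure.pi fun _ => gaussianReal 0 1) = M i i := by
    intro i
    rw [integral_finset_sum _ (fun j _ => (my_cross_integrable n i j).const_mul _)]
    have h3 : ∀ j : Fin n, ∫ x : Fin n → ℝ, M i j * (x i * x j)
        ∂(Measure.pi fun _ => gaussianReal 0 1) = M i j * (if i = j then 1 else 0) := by
      intro j
      rw [integral_const_mul, my_cross n i j]
    simp_rw [h3]
    simp [mul_ite, Finset.sum_ite_eq]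
  simp_rw [h2]
  rfl

end ISMAux
/-- **ISM loss on a flat stratum equals −(n−d)/2.**
Let `V ⊆ ℝⁿ` be a `d`-dimensional linear subspace, `x₀ ∈ ℝⁿ`, `H` invertible and `Σ`
positive definite with positive-definite square root `S` (`S` positive definite,
`S * S = Σ`). Let `x̂₀ : ℝⁿ → ℝⁿ` be, for each `y`, the unique minimizer over the affine
stratum `x₀ + V` of the Mahalanobis distance `(y − Hx)ᵀΣ⁻¹(y − Hx)`, and define the score
prediction `s(y) = −Σ⁻¹(y − H x̂₀(y))`, an affine function of `y` with constant Jacobian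
`D` (so `s(y) = Dy + s(0)`). With `ε ~ N(0, Iₙ)` (independent standard normal
coordinates) and `x_t = Hx₀ + Sε`, the ISM loss satisfies
`E[Tr(Σ·Ds) + ½ s(x_t)ᵀ Σ s(x_t)] = −(n − d)/2`. -/
theorem ism_loss_flat_stratum_eq_neg_codim_half
    (n d : ℕ) (V : Submodule ℝ (Fin n → ℝ)) (hV : Module.finrank ℝ V = d)
    (x₀ : Fin n → ℝ)
    (H : Matrix (Fin n) (Fin n) ℝ) (hH : IsUnit H.det)
    (Sig : Matrix (Fin n) (Fin n) ℝ) (hSig : Sig.PosDef)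
    (S : Matrix (Fin n) (Fin n) ℝ) (hS : S.PosDef) (hSsq : S * S = Sig)
    (xhat : (Fin n → ℝ) → (Fin n → ℝ))
    (hxhat : ∀ y : Fin n → ℝ,
      (∃ v ∈ V, xhat y = x₀ + v) ∧
      ∀ x : Fin n → ℝ, (∃ v ∈ V, x = x₀ + v) → x ≠ xhat y →
        (y - H.mulVec (xhat y)) ⬝ᵥ Sig⁻¹.mulVec (y - H.mulVec (xhat y)) <
          (y - H.mulVec x) ⬝ᵥ Sig⁻¹.mulVec (y - H.mulVec x))
    (s : (Fin n → ℝ) → (Fin n → ℝ))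
    (hs : ∀ y : Fin n → ℝ, s y = -(Sig⁻¹.mulVec (y - H.mulVec (xhat y))))
    (D : Matrix (Fin n) (Fin n) ℝ)
    (hD : ∀ y : Fin n → ℝ, s y = D.mulVec y + s 0)
    (μ : Measure (Fin n → ℝ))
    (hμ : μ = Measure.pi fun _ => gaussianReal 0 1) :
    (∫ ε, ((Sig * D).trace
        + (1 / 2) * (s (H.mulVec x₀ + S.mulVec ε)
            ⬝ᵥ Sig.mulVec (s (H.mulVec x₀ + S.mulVec ε)))) ∂μ)
      = -((n : ℝ) - d) / 2 := by
  subst hμ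
  -- basic facts about Sig
  have hSdet : IsUnit Sig.det := isUnit_iff_ne_zero.mpr hSig.det_pos.ne'
  have hInvPD : Sig⁻¹.PosDef := hSig.inv
  have hInvTr : Sig⁻¹ᵀ = Sig⁻¹ := by
    rw [← Matrix.conjTranspose_eq_transpose_of_trivial]; exact hInvPD.1
  have hSTr : Sᵀ = S := by
    rw [← Matrix.conjTranspose_eq_transpose_of_trivial]; exact hS.1
  have hdotpos : ∀ u : Fin n → ℝ, u ≠ 0 → 0 < u ⬝ᵥ Sig⁻¹.mulVec u := by
    intro u hu
    have := hInvPD.dotProduct_mulVec_pos hu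
    simpa using this
  have hdotnonneg : ∀ u : Fin n → ℝ, 0 ≤ u ⬝ᵥ Sig⁻¹.mulVec u := by
    intro u
    rcases eq_or_ne u 0 with h | h
    · simp [h]
    · exact (hdotpos u h).le
  have hdotzero : ∀ u : Fin n → ℝ, u ⬝ᵥ Sig⁻¹.mulVec u = 0 → u = 0 := by
    intro u h
    by_contra hu
    exact absurd h (ne_of_gt (hdotpos u hu))
  have hdsymm : ∀ v w : Fin n → ℝ, v ⬝ᵥ Sig⁻¹.mulVec w = w ⬝ᵥ Sig⁻¹.mulVec v :=
    my_dot_symm hInvTr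
  set Q : Matrix (Fin n) (Fin n) ℝ := -(Sig * D) with hQdef
  -- residual formula
  have hr : ∀ y, y - H.mulVec (xhat y) = -(Sig.mulVec (s y)) := by
    intro y
    rw [hs y, Matrix.mulVec_neg, neg_neg, Matrix.mulVec_mulVec,
      Matrix.mul_nonsing_inv _ hSdet, Matrix.one_mulVec]
  -- xhat at the center
  have hx0 : xhat (H.mulVec x₀) = x₀ := by
    by_contra hne
    have hmem : ∃ v ∈ V, x₀ = x₀ + v := ⟨0, V.zero_mem, by simp⟩
    have hlt := (hxhat (H.mulVec x₀)).2 x₀ hmem (fun he => hne he.symm)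
    have h0 : H.mulVec x₀ - H.mulVec x₀ = 0 := sub_self _
    rw [h0] at hlt
    simp only [zero_dotProduct] at hlt
    exact absurd hlt (not_lt.mpr (hdotnonneg _))
  have hs0 : s (H.mulVec x₀) = 0 := by
    rw [hs, hx0, sub_self, Matrix.mulVec_zero, neg_zero]
  have hsy : ∀ y, s y = D.mulVec (y - H.mulVec x₀) := by
    intro y
    have h0 := hD (H.mulVec x₀)
    rw [hs0] at h0
    have hs0' : s 0 = -(D.mulVec (H.mulVec x₀)) :=
      eq_neg_of_add_eq_zero_right h0.symm
    rw [hD y, hs0', Matrix.mulVec_sub]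
    abel
  have hrQ : ∀ y, y - H.mulVec (xhat y) = Q.mulVec (y - H.mulVec x₀) := by
    intro y
    rw [hr y, hsy y, Matrix.mulVec_mulVec, hQdef, Matrix.neg_mulVec]
  -- orthogonality of the residual
  have horth : ∀ y, ∀ v ∈ V,
      (y - H.mulVec (xhat y)) ⬝ᵥ Sig⁻¹.mulVec (H.mulVec v) = 0 := by
    intro y v hv
    by_cases hv0 : v = 0
    · simp [hv0, Matrix.mulVec_zero]
    obtain ⟨v₀, hv₀, hw⟩ := (hxhat y).1
    set w := xhat y with hwdef
    set r : Fin n → ℝ := y - H.mulVec w with hrdef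
    set u : Fin n → ℝ := H.mulVec v with hudef
    set b : ℝ := r ⬝ᵥ Sig⁻¹.mulVec u with hbdef
    set c : ℝ := u ⬝ᵥ Sig⁻¹.mulVec u with hcdef
    show b = 0
    by_contra hbne
    have hcnn : 0 ≤ c := hdotnonneg u
    have hc1 : (0:ℝ) < c + 1 := by linarith
    set t : ℝ := b / (c + 1) with htdef
    have htne : t ≠ 0 := div_ne_zero hbne (ne_of_gt hc1)
    have hxmem : ∃ v' ∈ V, w + t • v = x₀ + v' :=
      ⟨v₀ + t • v, V.add_mem hv₀ (V.smul_mem t hv), by rw [hw, add_assoc]⟩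
    have hxne : w + t • v ≠ w := by
      intro h
      have h2 : t • v = 0 := by
        have := add_eq_left.mp h
        exact this
      rcases smul_eq_zero.mp h2 with h3 | h3
      · exact htne h3
      · exact hv0 h3
    have hlt := (hxhat y).2 (w + t • v) hxmem hxne
    have hexp : y - H.mulVec (w + t • v) = r - t • u := by
      rw [Matrix.mulVec_add, Matrix.mulVec_smul, hrdef, hudef]
      abel
    rw [hexp] at hlt
    have hquad : (r - t • u) ⬝ᵥ Sig⁻¹.mulVec (r - t • u)
        = r ⬝ᵥ Sig⁻¹.mulVec r - 2 * t * b + t ^ 2 * c := by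
      have hcross : u ⬝ᵥ Sig⁻¹.mulVec r = b := by
        rw [hdsymm u r]
      rw [Matrix.mulVec_sub, Matrix.mulVec_smul, sub_dotProduct,
        smul_dotProduct, dotProduct_sub, dotProduct_sub,
        dotProduct_smul, dotProduct_smul, hcross, ← hbdef, ← hcdef]
      simp only [smul_eq_mul]
      ring
    rw [hquad] at hlt
    have hkey : 0 < -(2 * t * b) + t ^ 2 * c := by
      have := sub_lt_iff_lt_add.mpr hlt
      linarith
    have htc : t * (c + 1) = b := div_mul_cancel₀ b (ne_of_gt hc1)
    have hb2 : 0 < b ^ 2 := by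
      rcases lt_or_gt_of_ne hbne with h | h <;> nlinarith
    have hprod : 0 < (-(2 * t * b) + t ^ 2 * c) * (c + 1) ^ 2 :=
      mul_pos hkey (by positivity)
    nlinarith [hprod, htc, hb2, hcnn, sq_nonneg t, sq_nonneg (t * (c+1))]
  -- properties of Q
  have hQorth : ∀ z : Fin n → ℝ, ∀ v ∈ V,
      (Q.mulVec z) ⬝ᵥ Sig⁻¹.mulVec (H.mulVec v) = 0 := by
    intro z v hv
    have h := horth (z + H.mulVec x₀) v hv
    rw [hrQ (z + H.mulVec x₀), add_sub_cancel_right] at h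
    exact h
  have hQW : ∀ z : Fin n → ℝ, ∃ v ∈ V, z - Q.mulVec z = H.mulVec v := by
    intro z
    obtain ⟨v, hv, hxe⟩ := (hxhat (z + H.mulVec x₀)).1
    refine ⟨v, hv, ?_⟩
    have h1 := hrQ (z + H.mulVec x₀)
    rw [hxe, add_sub_cancel_right, Matrix.mulVec_add] at h1
    rw [← h1]
    abel
  have hQzeroW : ∀ v ∈ V, Q.mulVec (H.mulVec v) = 0 := by
    intro v hv
    obtain ⟨v', hv', he⟩ := hQW (H.mulVec v)
    have hmem : Q.mulVec (H.mulVec v) = H.mulVec (v - v') := by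
      rw [Matrix.mulVec_sub, ← he]
      abel
    have h0 := hQorth (H.mulVec v) (v - v') (V.sub_mem hv hv')
    rw [← hmem] at h0
    exact hdotzero _ h0
  have hQidem : ∀ z : Fin n → ℝ, Q.mulVec (Q.mulVec z) = Q.mulVec z := by
    intro z
    obtain ⟨v, hv, he⟩ := hQW (Q.mulVec z)
    have h2 : (Q.mulVec (Q.mulVec z) - Q.mulVec z)
        ⬝ᵥ Sig⁻¹.mulVec (H.mulVec v) = 0 := by
      rw [sub_dotProduct, hQorth (Q.mulVec z) v hv, hQorth z v hv, sub_zero]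
    have he' : Q.mulVec (Q.mulVec z) - Q.mulVec z = -(H.mulVec v) := by
      rw [← he]; abel
    rw [he'] at h2
    have h3 : (H.mulVec v) ⬝ᵥ Sig⁻¹.mulVec (H.mulVec v) = 0 := by
      have := h2
      rw [neg_dotProduct] at this
      linarith
    have h4 := hdotzero _ h3
    have : Q.mulVec (Q.mulVec z) - Q.mulVec z = 0 := by rw [he', h4, neg_zero]
    exact sub_eq_zero.mp this
  have hQsym : ∀ z w : Fin n → ℝ,
      (Q.mulVec z) ⬝ᵥ Sig⁻¹.mulVec w = z ⬝ᵥ Sig⁻¹.mulVec (Q.mulVec w) := by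
    intro z w
    obtain ⟨v, hv, hev⟩ := hQW w
    obtain ⟨v', hv', hev'⟩ := hQW z
    have h1 : (Q.mulVec z) ⬝ᵥ Sig⁻¹.mulVec w
        = (Q.mulVec z) ⬝ᵥ Sig⁻¹.mulVec (Q.mulVec w) := by
      have hw' : w = Q.mulVec w + H.mulVec v := by rw [← hev]; abel
      conv_lhs => rw [hw']
      rw [Matrix.mulVec_add, dotProduct_add, hQorth z v hv, add_zero]
    have h2 : z ⬝ᵥ Sig⁻¹.mulVec (Q.mulVec w)
        = (Q.mulVec z) ⬝ᵥ Sig⁻¹.mulVec (Q.mulVec w) := by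
      have hz' : z = Q.mulVec z + H.mulVec v' := by rw [← hev']; abel
      conv_lhs => rw [hz']
      rw [add_dotProduct]
      have h3 : (H.mulVec v') ⬝ᵥ Sig⁻¹.mulVec (Q.mulVec w) = 0 := by
        rw [hdsymm]
        exact hQorth w v' hv'
      rw [h3, add_zero]
    rw [h1, h2]
  -- matrix level identities
  have hQQ : Q * Q = Q := by
    apply my_mat_ext
    intro z
    rw [← Matrix.mulVec_mulVec]
    exact hQidem z
  have hQT : Qᵀ * Sig⁻¹ = Sig⁻¹ * Q := by
    apply my_mat_ext_dot
    intro z w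
    rw [← Matrix.mulVec_mulVec, ← Matrix.mulVec_mulVec]
    rw [Matrix.dotProduct_mulVec z Qᵀ _, Matrix.vecMul_transpose]
    exact hQsym z w
  have hDeq : D = -(Sig⁻¹ * Q) := by
    rw [hQdef, Matrix.mul_neg, neg_neg, ← Matrix.mul_assoc,
      Matrix.nonsing_inv_mul _ hSdet, Matrix.one_mul]
  have hDT : Dᵀ = D := by
    conv_lhs => rw [hDeq]
    rw [Matrix.transpose_neg, Matrix.transpose_mul, hInvTr, hQT]
    exact hDeq.symm
  have hDSD : D * Sig * D = -D := by
    conv_lhs => rw [hDeq]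
    simp only [Matrix.neg_mul, Matrix.mul_neg, neg_neg]
    simp only [Matrix.mul_assoc]
    rw [← Matrix.mul_assoc Sig Sig⁻¹ Q, Matrix.mul_nonsing_inv _ hSdet, Matrix.one_mul]
    rw [hQQ, hDeq, neg_neg]
  -- trace computation
  have hQWsub : ∀ z : Fin n → ℝ, ∃ v ∈ V, (1 - Q).mulVec z = H.mulVec v := by
    intro z
    obtain ⟨v, hv, he⟩ := hQW z
    exact ⟨v, hv, by rw [Matrix.sub_mulVec, Matrix.one_mulVec]; exact he⟩
  set W : Submodule ℝ (Fin n → ℝ) := V.map (Matrix.toLin' H) with hWdef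
  have hproj : LinearMap.IsProj W (Matrix.toLin' (1 - Q)) := by
    constructor
    · intro x
      obtain ⟨v, hv, he⟩ := hQWsub x
      refine Submodule.mem_map.mpr ⟨v, hv, ?_⟩
      rw [Matrix.toLin'_apply, Matrix.toLin'_apply]
      exact he.symm
    · intro x hx
      obtain ⟨v, hv, he⟩ := Submodule.mem_map.mp hx
      rw [Matrix.toLin'_apply] at he
      rw [Matrix.toLin'_apply, Matrix.sub_mulVec, Matrix.one_mulVec]
      have h0 : Q.mulVec x = 0 := by
        rw [← he]
        exact hQzeroW v hv
      rw [h0, sub_zero]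
  have hfinW : Module.finrank ℝ W = d := by
    have h := LinearEquiv.finrank_map_eq (Matrix.toLinearEquiv' H (H.invertibleOfIsUnitDet hH)) V
    rw [Matrix.toLinearEquiv'_apply] at h
    rw [hWdef]
    exact h.trans hV
  have htrP : Matrix.trace (1 - Q) = (d : ℝ) := by
    have h := hproj.trace
    rw [LinearMap.trace_eq_matrix_trace ℝ (Pi.basisFun ℝ (Fin n)),
      LinearMap.toMatrix_eq_toMatrix', LinearMap.toMatrix'_toLin'] at h
    rw [h, hfinW]
  have htrQ : Matrix.trace Q = (n : ℝ) - d := by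
    have h1 : Matrix.trace ((1 : Matrix (Fin n) (Fin n) ℝ) - Q)
        = Matrix.trace (1 : Matrix (Fin n) (Fin n) ℝ) - Matrix.trace Q :=
      Matrix.trace_sub _ _
    have h2 : Matrix.trace (1 : Matrix (Fin n) (Fin n) ℝ) = (n : ℝ) := by
      rw [Matrix.trace_one]
      simp
    rw [htrP, h2] at h1
    linarith
  have htrSigD : (Sig * D).trace = -((n : ℝ) - d) := by
    have h : Sig * D = -Q := by rw [hQdef, neg_neg]
    rw [h, Matrix.trace_neg, htrQ]
  -- the score at x_t
  have hst : ∀ ε : Fin n → ℝ,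
      s (H.mulVec x₀ + S.mulVec ε) = (D * S).mulVec ε := by
    intro ε
    rw [hsy, add_sub_cancel_left, Matrix.mulVec_mulVec]
  have hquadform : ∀ ε : Fin n → ℝ,
      ((D * S).mulVec ε) ⬝ᵥ Sig.mulVec ((D * S).mulVec ε)
        = ε ⬝ᵥ ((D * S)ᵀ * Sig * (D * S)).mulVec ε := by
    intro ε
    rw [← Matrix.mulVec_mulVec ε ((D * S)ᵀ * Sig) (D * S),
      ← Matrix.mulVec_mulVec ((D * S).mulVec ε) (D * S)ᵀ Sig,
      Matrix.dotProduct_mulVec ε (D * S)ᵀ _, Matrix.vecMul_transpose]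
  have htrM : ((D * S)ᵀ * Sig * (D * S)).trace = (n : ℝ) - d := by
    have hBT : (D * S)ᵀ = S * D := by
      rw [Matrix.transpose_mul, hDT, hSTr]
    have h1 : (D * S)ᵀ * Sig * (D * S) = S * (D * Sig * D) * S := by
      rw [hBT]
      simp only [Matrix.mul_assoc]
    rw [h1, hDSD]
    have h2 : S * -D * S = -(S * D * S) := by
      simp only [Matrix.mul_neg, Matrix.neg_mul]
    rw [h2, Matrix.trace_neg]
    have h3 : (S * D * S).trace = (Sig * D).trace := by
      rw [Matrix.mul_assoc, Matrix.trace_mul_comm S (D * S), Matrix.mul_assoc,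
        hSsq, Matrix.trace_mul_comm D Sig]
    rw [h3, htrSigD]
    ring
  -- final integration
  have hIq : Integrable (fun ε : Fin n → ℝ => ε ⬝ᵥ ((D * S)ᵀ * Sig * (D * S)).mulVec ε)
      (Measure.pi fun _ => gaussianReal 0 1) := my_quad_integrable n _
  have hcongr : (fun ε : Fin n → ℝ => (Sig * D).trace
        + (1 / 2) * (s (H.mulVec x₀ + S.mulVec ε)
            ⬝ᵥ Sig.mulVec (s (H.mulVec x₀ + S.mulVec ε))))
      = fun ε : Fin n → ℝ => (Sig * D).trace
        + (1 / 2) * (ε ⬝ᵥ ((D * S)ᵀ * Sig * (D * S)).mulVec ε) := by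
    funext ε
    rw [hst ε, hquadform ε]
  rw [hcongr]
  have hprob : IsProbabilityMeasure (Measure.pi fun _ : Fin n => gaussianReal 0 1) :=
    inferInstance
  rw [integral_add (integrable_const _) (hIq.const_mul _), integral_const,
    integral_const_mul, my_quad_integral n _, htrM, htrSigD]
  simp only [probReal_univ, measure_univ, ENNReal.toReal_one, smul_eq_mul, one_mul]
  ring
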